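/- Let X, D, C be groups and d : X → D, c : X → C group homomorphisms; set A = ker d ∩ ker c, and let Φ : □(d,c) → A × ◇(d,c) be the map Φ(δ, α, γ, β) = (δ·α⁻¹·β·γ⁻¹, (α, γ, β)). Then the following are equivalent: (i) the commutator subgroup ⁅ker d, ker c⁆ is trivial and every element of A commutes with every element of X (⁅A, X⁆ = 1); (ii) Φ is a homomorphism of groups; (iii) A is an abelian group and Φ is an isomorphism of groups □(d,c) ≅ A × ◇(d,c). -/

import Mathlib

/-!
The word `δ·α⁻¹·β·γ⁻¹` of a diamond lies in `A = ker d ∩ ker c`, and `δ` is recovered from it and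
`(α, γ, β)`, so `Φ` is always a bijection `□(d,c) → A × ◇(d,c)`. Expanding the word of a product
of diamonds, `Φ` is multiplicative as soon as `α⁻¹β ∈ ker d` commutes with `δ'α'⁻¹ ∈ ker c` and the
word of the second diamond, an element of `A`, commutes with `γ`. Conversely, evaluating
multiplicativity on the diamonds `(1, 1, k, k)·(h, 1, h, 1)` and `(x, x, x, x)·(a, 1, 1, 1)` gives
back `kh = hk` for `k ∈ ker d`, `h ∈ ker c`, and `xa = ax` for `a ∈ A`.
-/

/-- The set of two-fold diamonds `(δ, α, γ, β)` for `d : X → D`, `c : X → C`. -/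
def diamondSet {X C D : Type*} [Group X] [Group C] [Group D]
    (d : X →* D) (c : X →* C) : Set (X × X × X × X) :=
  {q | c q.1 = c q.2.1 ∧ c q.2.2.1 = c q.2.2.2 ∧
       d q.1 = d q.2.2.1 ∧ d q.2.1 = d q.2.2.2}

/-- The set of open diamonds `(α, γ, β)` (diamonds with the `δ`-face missing). -/
def openDiamondSet {X C D : Type*} [Group X] [Group C] [Group D]
    (d : X →* D) (c : X →* C) : Set (X × X × X) :=
  {t | c t.2.1 = c t.2.2 ∧ d t.1 = d t.2.2}

/-- The word `δ·α⁻¹·β·γ⁻¹` of a diamond `(δ, α, γ, β)`. -/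
def phiWord {X : Type*} [Group X] (q : X × X × X × X) : X :=
  q.1 * q.2.1⁻¹ * q.2.2.2 * q.2.2.1⁻¹

/-- The map `Φ : (δ, α, γ, β) ↦ (δ·α⁻¹·β·γ⁻¹, (α, γ, β))`. -/
def phiMap {X : Type*} [Group X] (q : X × X × X × X) : X × (X × X × X) :=
  (phiWord q, q.2)

theorem Subgroup.commutator_eq_bot_iff_forall_commute {G : Type*} [Group G] {H K : Subgroup G} :
    ⁅H, K⁆ = ⊥ ↔ ∀ h ∈ H, ∀ k ∈ K, Commute h k := by
  simp only [Subgroup.commutator_eq_bot_iff_le_centralizer, SetLike.le_def,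
    Subgroup.mem_centralizer_iff]
  exact forall₂_congr fun h _ => forall₂_congr fun k _ => eq_comm

section Word

variable {X : Type*} [Group X]

theorem phiMap_injective : Function.Injective (phiMap (X := X)) := by
  rintro ⟨δ, q⟩ ⟨δ', q'⟩ h
  obtain ⟨hword, rfl : q = q'⟩ := Prod.ext_iff.mp h
  change δ * _ * _ * _ = δ' * _ * _ * _ at hword
  rw [mul_right_cancel (mul_right_cancel (mul_right_cancel hword))]

theorem phiWord_mul_of_commute {p q : X × X × X × X}
    (hmid : Commute (p.2.1⁻¹ * p.2.2.2) (q.1 * q.2.1⁻¹))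
    (hword : Commute (phiWord q) p.2.2.1⁻¹) :
    phiWord (p * q) = phiWord p * phiWord q := by
  obtain ⟨δ, α, γ, β⟩ := p
  obtain ⟨δ', α', γ', β'⟩ := q
  change (δ * δ') * (α * α')⁻¹ * (β * β') * (γ * γ')⁻¹ =
    (δ * α⁻¹ * β * γ⁻¹) * (δ' * α'⁻¹ * β' * γ'⁻¹)
  calc (δ * δ') * (α * α')⁻¹ * (β * β') * (γ * γ')⁻¹
      = δ * ((δ' * α'⁻¹) * (α⁻¹ * β)) * (β' * γ'⁻¹) * γ⁻¹ := by group
    _ = δ * α⁻¹ * β * ((δ' * α'⁻¹ * β' * γ'⁻¹) * γ⁻¹) := by rw [← hmid.eq]; group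
    _ = δ * α⁻¹ * β * (γ⁻¹ * (δ' * α'⁻¹ * β' * γ'⁻¹)) := congrArg _ hword.eq
    _ = (δ * α⁻¹ * β * γ⁻¹) * (δ' * α'⁻¹ * β' * γ'⁻¹) := by group

end Word

section Diamond

variable {X C D : Type*} [Group X] [Group C] [Group D] {d : X →* D} {c : X →* C}

theorem phiWord_mem_of_mem_diamondSet {q : X × X × X × X} (hq : q ∈ diamondSet d c) :
    phiWord q ∈ d.ker ⊓ c.ker := by
  obtain ⟨δ, α, γ, β⟩ := q
  obtain ⟨hcδ, hcγ, hdδ, hdα⟩ := hq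
  refine ⟨?_, ?_⟩
  · change d (δ * α⁻¹ * β * γ⁻¹) = 1
    simp only [map_mul, map_inv, hdδ, hdα]
    group
  · change c (δ * α⁻¹ * β * γ⁻¹) = 1
    simp only [map_mul, map_inv, hcδ, ← hcγ]
    group

theorem bijOn_phiMap_diamondSet :
    Set.BijOn phiMap (diamondSet d c)
      {p : X × (X × X × X) | p.1 ∈ d.ker ⊓ c.ker ∧ p.2 ∈ openDiamondSet d c} := by
  refine ⟨fun q hq => ⟨phiWord_mem_of_mem_diamondSet hq, hq.2.1, hq.2.2.2⟩,
    phiMap_injective.injOn, ?_⟩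
  rintro ⟨a, α, γ, β⟩ ⟨ha, hcγ, hdα⟩
  obtain ⟨hda, hca⟩ : d a = 1 ∧ c a = 1 := ha
  refine ⟨(a * γ * β⁻¹ * α, α, γ, β), ⟨?_, hcγ, ?_, hdα⟩, ?_⟩
  · change c (a * γ * β⁻¹ * α) = c α
    simp only [map_mul, map_inv, hca, hcγ]
    group
  · change d (a * γ * β⁻¹ * α) = d γ
    simp only [map_mul, map_inv, hda, hdα]
    group
  · refine Prod.ext ?_ rfl
    change a * γ * β⁻¹ * α * α⁻¹ * β * γ⁻¹ = a
    group

theorem phiMap_mul_of_commute (hker : ∀ k ∈ d.ker, ∀ h ∈ c.ker, Commute k h)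
    (hcentral : ∀ a ∈ d.ker ⊓ c.ker, ∀ x : X, Commute a x)
    {p q : X × X × X × X} (hp : p ∈ diamondSet d c) (hq : q ∈ diamondSet d c) :
    phiMap (p * q) = phiMap p * phiMap q := by
  refine Prod.ext (phiWord_mul_of_commute (hker _ ?_ _ ?_) ?_) rfl
  · rw [MonoidHom.mem_ker, map_mul, map_inv, hp.2.2.2, inv_mul_cancel]
  · rw [MonoidHom.mem_ker, map_mul, map_inv, hq.1, mul_inv_cancel]
  · exact hcentral _ (phiWord_mem_of_mem_diamondSet hq) _

theorem commute_of_phiMap_mul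
    (hΦ : ∀ p ∈ diamondSet d c, ∀ q ∈ diamondSet d c, phiMap (p * q) = phiMap p * phiMap q)
    {k h : X} (hk : k ∈ d.ker) (hh : h ∈ c.ker) : Commute k h := by
  rw [MonoidHom.mem_ker] at hk hh
  have hword := congrArg Prod.fst <| hΦ (1, 1, k, k) ⟨rfl, rfl, by simp [hk], by simp [hk]⟩
    (h, 1, h, 1) ⟨by simp [hh], by simp [hh], rfl, rfl⟩
  change (1 * h) * (1 * 1 : X)⁻¹ * (k * 1) * (k * h)⁻¹ =
    (1 * 1⁻¹ * k * k⁻¹) * (h * 1⁻¹ * 1 * h⁻¹) at hword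
  simp only [mul_one, one_mul, inv_one, mul_inv_cancel, mul_inv_rev, ← mul_assoc] at hword
  exact (commutatorElement_eq_one_iff_commute.mp hword).symm

theorem commute_of_mem_inf_of_phiMap_mul
    (hΦ : ∀ p ∈ diamondSet d c, ∀ q ∈ diamondSet d c, phiMap (p * q) = phiMap p * phiMap q)
    {a : X} (ha : a ∈ d.ker ⊓ c.ker) (x : X) : Commute a x := by
  obtain ⟨hda, hca⟩ : d a = 1 ∧ c a = 1 := ha
  have hword := congrArg Prod.fst <|
    hΦ (x, x, x, x) ⟨rfl, rfl, rfl, rfl⟩ (a, 1, 1, 1) ⟨by simp [hca], rfl, by simp [hda], rfl⟩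
  change (x * a) * (x * 1)⁻¹ * (x * 1) * (x * 1)⁻¹ = (x * x⁻¹ * x * x⁻¹) * (a * 1⁻¹ * 1 * 1⁻¹)
    at hword
  simp only [mul_one, inv_one, mul_inv_cancel, one_mul, inv_mul_cancel_right] at hword
  exact (mul_inv_eq_iff_eq_mul.mp hword).symm

end Diamond

/-- Characterisation of centrality in degree two for groups: the commutator
conditions `⁅ker d, ker c⁆ = 1` and `⁅A, X⁆ = 1` hold iff `Φ` is a homomorphism,
iff `A` is abelian and `Φ` is an isomorphism `□(d,c) ≅ A × ◇(d,c)`. -/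
theorem central_iff_diamond_iso {X C D : Type*} [Group X] [Group C] [Group D]
    (d : X →* D) (c : X →* C) :
    ((⁅d.ker, c.ker⁆ = (⊥ : Subgroup X) ∧
        ∀ a ∈ d.ker ⊓ c.ker, ∀ x : X, a * x = x * a) ↔
      (∀ p ∈ diamondSet d c, ∀ q ∈ diamondSet d c,
        phiMap (p * q) = phiMap p * phiMap q)) ∧
    ((⁅d.ker, c.ker⁆ = (⊥ : Subgroup X) ∧
        ∀ a ∈ d.ker ⊓ c.ker, ∀ x : X, a * x = x * a) ↔
      ((∀ a ∈ d.ker ⊓ c.ker, ∀ b ∈ d.ker ⊓ c.ker, a * b = b * a) ∧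
        (∀ p ∈ diamondSet d c, ∀ q ∈ diamondSet d c,
          phiMap (p * q) = phiMap p * phiMap q) ∧
        Set.BijOn phiMap (diamondSet d c)
          {p : X × (X × X × X) | p.1 ∈ d.ker ⊓ c.ker ∧ p.2 ∈ openDiamondSet d c})) := by
  have central_iff_mul : (⁅d.ker, c.ker⁆ = (⊥ : Subgroup X) ∧
      ∀ a ∈ d.ker ⊓ c.ker, ∀ x : X, a * x = x * a) ↔
      ∀ p ∈ diamondSet d c, ∀ q ∈ diamondSet d c, phiMap (p * q) = phiMap p * phiMap q := by
    rw [Subgroup.commutator_eq_bot_iff_forall_commute]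
    exact ⟨fun ⟨hker, hcentral⟩ _ hp _ hq => phiMap_mul_of_commute hker hcentral hp hq,
      fun hΦ => ⟨fun _ hk _ hh => commute_of_phiMap_mul hΦ hk hh,
        fun _ ha x => commute_of_mem_inf_of_phiMap_mul hΦ ha x⟩⟩
  refine ⟨central_iff_mul, fun hcentral => ⟨fun a ha b _ => hcentral.2 a ha b,
    central_iff_mul.mp hcentral, bijOn_phiMap_diamondSet⟩, fun h => central_iff_mul.mpr h.2.1⟩
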